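/- Let K be a commutative ring, P a finite poset, U ⊆ P a sieve with inclusion u : U ↪ P, and Z ⊆ P a subposet with inclusion i : Z ↪ P; let u' : U∩Z ↪ Z and i' : U∩Z ↪ U denote the induced inclusions (U∩Z is a sieve in Z). Then the canonical base-change morphism i^* u_* → (u')_* (i')^*, obtained as the composite i^* u_* → (u')_*(u')^* i^* u_* ≅ (u')_*(i')^* u^* u_* → (u')_*(i')^* using the unit of (u'^*, u'_*) and the counit of (u^*, u_*), is an isomorphism of functors (K-Mod)^U → (K-Mod)^Z. -/

import Mathlib

open CategoryTheory CategoryTheory.Limits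

universe u

variable (K : Type u) [CommRing K] (P : Type u) [PartialOrder P]

/-- The inclusion functor of a subposet (a subset of `P` with the induced order). -/
def inclFunctor (U : Set P) : (↥U) ⥤ P :=
  (Subtype.mono_coe (· ∈ U)).functor

/-- The inclusion functor `U ∩ Z ↪ Z`. -/
def inclInterLeft (U Z : Set P) : (↥(U ∩ Z)) ⥤ (↥Z) :=
  Monotone.functor (f := fun w => (⟨w.1, w.2.2⟩ : Z)) fun _ _ h => h

/-- The inclusion functor `U ∩ Z ↪ U`. -/
def inclInterRight (U Z : Set P) : (↥(U ∩ Z)) ⥤ (↥U) :=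
  Monotone.functor (f := fun w => (⟨w.1, w.2.1⟩ : U)) fun _ _ h => h

lemma incl_comm (U Z : Set P) :
    inclInterRight P U Z ⋙ inclFunctor P U = inclInterLeft P U Z ⋙ inclFunctor P Z :=
  CategoryTheory.Functor.ext (fun _ => rfl) (fun _ _ _ => Subsingleton.elim _ _)

/-- The canonical base-change morphism `i^* u_* G → (u')_* (i')^* G`, obtained as the
composite `i^* u_* → (u')_*(u')^* i^* u_* ≅ (u')_*(i')^* u^* u_* → (u')_*(i')^*` using the
unit of `((u')^*, (u')_*)` and the counit of `(u^*, u_*)`. -/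
noncomputable def baseChange (U Z : Set P) (G : (↥U) ⥤ ModuleCat.{u} K) :
    inclFunctor P Z ⋙ ((inclFunctor P U).ran.obj G) ⟶
      (inclInterLeft P U Z).ran.obj (inclInterRight P U Z ⋙ G) :=
  ((inclInterLeft P U Z).ranAdjunction (ModuleCat.{u} K)).unit.app
      (inclFunctor P Z ⋙ ((inclFunctor P U).ran.obj G)) ≫
    (inclInterLeft P U Z).ran.map
      (eqToHom (show inclInterLeft P U Z ⋙ (inclFunctor P Z ⋙ (inclFunctor P U).ran.obj G)
            = inclInterRight P U Z ⋙ (inclFunctor P U ⋙ (inclFunctor P U).ran.obj G) by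
          rw [← Functor.assoc, ← Functor.assoc, incl_comm]) ≫
        Functor.whiskerLeft (inclInterRight P U Z)
          (((inclFunctor P U).ranAdjunction (ModuleCat.{u} K)).counit.app G))

namespace Stmt14Aux

variable {K P}
variable (U Z : Set P) (G : (↥U) ⥤ ModuleCat.{u} K)

/-- The natural transformation `u'^* i^* u_* G ⟶ i'^* G`. -/
noncomputable def β :
    inclInterLeft P U Z ⋙ (inclFunctor P Z ⋙ (inclFunctor P U).ran.obj G) ⟶
      inclInterRight P U Z ⋙ G :=
  eqToHom (show inclInterLeft P U Z ⋙ (inclFunctor P Z ⋙ (inclFunctor P U).ran.obj G)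
        = inclInterRight P U Z ⋙ (inclFunctor P U ⋙ (inclFunctor P U).ran.obj G) by
      rw [← Functor.assoc, ← Functor.assoc, incl_comm]) ≫
    Functor.whiskerLeft (inclInterRight P U Z)
      (((inclFunctor P U).ranAdjunction (ModuleCat.{u} K)).counit.app G)

lemma baseChange_eq :
    baseChange K P U Z G =
      ((inclInterLeft P U Z).ranAdjunction (ModuleCat.{u} K)).unit.app
          (inclFunctor P Z ⋙ ((inclFunctor P U).ran.obj G)) ≫
        (inclInterLeft P U Z).ran.map (β U Z G) :=
  rfl

lemma β_app (w : ↥(U ∩ Z)) :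
    (β U Z G).app w =
      ((inclFunctor P U).ranCounit.app G).app (⟨w.1, w.2.1⟩ : U) := by
  rw [β, NatTrans.comp_app, Functor.ranAdjunction_counit]
  exact Category.id_comp _

lemma comm :
    Functor.whiskerLeft (inclInterLeft P U Z) (baseChange K P U Z G) ≫
        (inclInterLeft P U Z).ranCounit.app (inclInterRight P U Z ⋙ G) = β U Z G := by
  rw [baseChange_eq, Functor.whiskerLeft_comp, Category.assoc]
  have hnat := (inclInterLeft P U Z).ranCounit.naturality (β U Z G)
  dsimp at hnat
  rw [hnat, ← Category.assoc,
    Functor.ranCounit_app_whiskerLeft_ranAdjunction_unit_app, Category.id_comp]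

lemma isRKE (hU : ∀ ⦃a b : P⦄, a ≤ b → b ∈ U → a ∈ U) :
    (inclFunctor P Z ⋙ (inclFunctor P U).ran.obj G).IsRightKanExtension (β U Z G) := by
  have hpt : (Functor.RightExtension.mk _ (β U Z G)).IsPointwiseRightKanExtension := by
    intro z
    have B := (inclFunctor P U).isPointwiseRightKanExtensionRanCounit G
      ((inclFunctor P Z).obj z)
    by_cases hz : (z : P) ∈ U
    · -- the structured arrow category has an initial object `z` itself
      let w₀ : CategoryTheory.StructuredArrow z (inclInterLeft P U Z) :=
        CategoryTheory.StructuredArrow.mk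
          (show z ⟶ (inclInterLeft P U Z).obj ⟨(z : P), hz, z.2⟩ from homOfLE (le_refl z))
      -- from a cone over the small diagram, build a cone over the big diagram
      let bigCone : Cone (CategoryTheory.StructuredArrow.proj z (inclInterLeft P U Z) ⋙
            (inclInterRight P U Z ⋙ G)) →
          Cone (CategoryTheory.StructuredArrow.proj ((inclFunctor P Z).obj z)
            (inclFunctor P U) ⋙ G) := fun s =>
        { pt := s.pt
          π :=
            { app := fun g => s.π.app w₀ ≫
                G.map (homOfLE (show ((⟨(z : P), hz⟩ : U) ≤ g.right) from leOfHom g.hom))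
              naturality := fun g₁ g₂ φ => by
                dsimp
                rw [Category.id_comp, Category.assoc, ← G.map_comp]
                congr 1 } }
      refine
        { lift := fun s => B.lift (bigCone s)
          fac := fun s j => ?_
          uniq := fun s m hm => ?_ }
      · -- fac
        have h1 : ((Functor.RightExtension.mk _ (β U Z G)).coneAt z).π.app j =
            ((Functor.RightExtension.mk _
              ((inclFunctor P U).ranCounit.app G)).coneAt ((inclFunctor P Z).obj z)).π.app
              (CategoryTheory.StructuredArrow.mk
                (Y := (⟨j.right.1, j.right.2.1⟩ : U))
                (homOfLE (show ((inclFunctor P Z).obj z : P) ≤ j.right.1 from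
                  leOfHom j.hom))) := by
          dsimp [Functor.RightExtension.coneAt]
          erw [β_app]
          congr 1
        erw [h1, B.fac (bigCone s)]
        -- now relate the big cone leg with the small cone leg using naturality of `s.π`
        have h2 := s.w (CategoryTheory.StructuredArrow.homMk
          (homOfLE (show (w₀.right ≤ j.right) from leOfHom j.hom))
          (Subsingleton.elim _ _) : w₀ ⟶ j)
        dsimp at h2 ⊢
        rw [← h2]
        congr 1
      · -- uniq
        have hw' : m ≫ ((inclFunctor P U).ranCounit.app G).app (⟨(z : P), hz⟩ : U) =
            s.π.app w₀ := by
          have hw := hm w₀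
          dsimp [Functor.RightExtension.coneAt, Functor.RightExtension.mk] at hw
          erw [β_app] at hw
          have h0 : (inclFunctor P Z).map w₀.hom = 𝟙 ((inclFunctor P Z).obj z) :=
            Subsingleton.elim _ _
          erw [h0, CategoryTheory.Functor.map_id, Category.id_comp] at hw
          exact hw
        apply B.hom_ext
        intro g
        erw [B.fac (bigCone s)]
        have hnat := ((inclFunctor P U).ranCounit.app G).naturality
          (homOfLE (show ((⟨(z : P), hz⟩ : U) ≤ g.right) from leOfHom g.hom))
        dsimp [Functor.RightExtension.coneAt] at hnat ⊢
        have h3 : ((inclFunctor P U).ran.obj G).map g.hom =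
            ((inclFunctor P U).ran.obj G).map ((inclFunctor P U).map
              (homOfLE (show ((⟨(z : P), hz⟩ : U) ≤ g.right) from leOfHom g.hom))) := by
          apply congrArg
          apply Subsingleton.elim
        erw [h3, hnat, ← Category.assoc, hw']
        rfl
    · -- empty case
      refine
        { lift := fun s => B.lift
            { pt := s.pt
              π :=
                { app := fun g => (hz (hU (leOfHom g.hom) g.right.2)).elim
                  naturality := fun g₁ g₂ φ => (hz (hU (leOfHom g₁.hom) g₁.right.2)).elim } }
          fac := fun s j =>
            (hz (hU (show (z : P) ≤ (j.right.1 : P) from leOfHom j.hom) j.right.2.1)).elim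
          uniq := fun s m hm => B.hom_ext fun g =>
            (hz (hU (leOfHom g.hom) g.right.2)).elim }
  exact hpt.isRightKanExtension

end Stmt14Aux

/-- Let `U ⊆ P` be a sieve in a finite poset `P` and `Z ⊆ P` any subposet
(so that `U ∩ Z` is a sieve in `Z`).  Then the canonical base-change morphism
`i^* u_* → (u')_* (i')^*` is an isomorphism of functors `(K-Mod)^U → (K-Mod)^Z`. -/
theorem statement_14 [Fintype P] (U : Set P)
    (hU : ∀ ⦃a b : P⦄, a ≤ b → b ∈ U → a ∈ U) (Z : Set P) :
    ∀ G : (↥U) ⥤ ModuleCat.{u} K, IsIso (baseChange K P U Z G) := by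
  intro G
  have h1 := Stmt14Aux.isRKE U Z G hU
  exact (Functor.isRightKanExtension_iff_isIso (baseChange K P U Z G)
    ((inclInterLeft P U Z).ranCounit.app (inclInterRight P U Z ⋙ G))
    (Stmt14Aux.β U Z G) (Stmt14Aux.comm U Z G)).1 h1
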